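/- Let h_1, …, h_n ∈ ℝᵈ be unit vectors (‖h_i‖ = 1 for all i), and set ρ_{ij} = ⟨h_i, h_j⟩. Then the n × n real matrix Θ' with entries Θ'_{ij} = ρ_{ij} · (π - arccos ρ_{ij})/(2π) is positive semidefinite. -/

import Mathlib

open Matrix Real

/-!
Since `ρ (π - arccos ρ) / (2π) = ρ / 4 + ρ arcsin ρ / (2π)` and the Gram matrix `(ρᵢⱼ)` is positive
semidefinite, it suffices that `ρ ↦ ρ arcsin ρ`, applied entrywise, preserves positive
semidefiniteness of matrices with entries in `[-1, 1]`. By the Schur product theorem, entrywise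
power series with nonnegative coefficients do, and `(1 - y)^(-1/2)` is such a series. Rather than
expanding `arcsin`, differentiate in `s`: the matrix `(ρ arcsin (s ρ))` has `s`-derivative
`(ρ² / √(1 - (s ρ)²)) = (ρ²) ⊙ (1 - s² ρ²)^(-1/2)`, which is positive semidefinite for `0 < s < 1`,
so each of its quadratic forms is monotone on `[0, 1]` and vanishes at `s = 0`.
-/

theorem Real.exists_hasSum_one_div_sqrt_one_sub :
    ∃ c : ℕ → ℝ, 0 ≤ c ∧ ∀ y : ℝ, |y| < 1 → HasSum (fun k ↦ c k * y ^ k) (1 / √(1 - y)) := by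
  refine ⟨fun k ↦ Ring.choose ((1 / 2 : ℝ) + k - 1) k, fun k ↦ ?_, fun y hy ↦ ?_⟩
  · change 0 ≤ Ring.choose _ _
    rw [Ring.choose_eq_smul, Polynomial.descPochhammer_smeval_eq_ascPochhammer,
      Polynomial.ascPochhammer_smeval_eq_eval, smul_eq_mul,
      show (1 / 2 : ℝ) + k - 1 - k + 1 = 1 / 2 by ring]
    exact mul_nonneg (by positivity) (ascPochhammer_pos k _ (by norm_num)).le
  · have := (one_div_one_sub_rpow_hasFPowerSeriesOnBall_zero (1 / 2)).hasSum
      (y := y) (by simpa [enorm_eq_nnnorm, ← NNReal.coe_lt_coe] using hy)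
    simpa [FormalMultilinearSeries.ofScalars_apply_eq, Real.sqrt_eq_rpow, mul_comm] using this

theorem Real.hasDerivAt_mul_arcsin_mul {a s : ℝ} (h : |s * a| < 1) :
    HasDerivAt (fun s ↦ a * arcsin (s * a)) (a ^ 2 / √(1 - (s * a) ^ 2)) s := by
  obtain ⟨hlo, hhi⟩ := abs_lt.1 h
  refine (((hasDerivAt_arcsin hlo.ne' hhi.ne).comp s
    ((hasDerivAt_id s).mul_const a)).const_mul a).congr_deriv ?_
  simp only [one_mul]
  ring

theorem Real.mul_pi_sub_arccos_div_two_pi (x : ℝ) :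
    x * (π - arccos x) / (2 * π) = x / 4 + x * arcsin x / (2 * π) := by
  rw [arccos_eq_pi_div_two_sub_arcsin]
  field_simp
  ring

namespace Matrix

variable {ι : Type*} [Fintype ι]

open scoped ComplexOrder in
theorem PosSemidef.map_pow {𝕜 : Type*} [RCLike 𝕜] {A : Matrix ι ι 𝕜} (hA : A.PosSemidef)
    (k : ℕ) : (A.map (· ^ k)).PosSemidef := by
  induction k with
  | zero =>
    have hone : A.map (· ^ 0) = vecMulVec (fun _ ↦ 1) (star fun _ ↦ 1) := by
      ext i j; simp [vecMulVec]
    rw [hone]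
    exact posSemidef_vecMulVec_self_star _
  | succ k ih =>
    have hsucc : A.map (· ^ (k + 1)) = A.map (· ^ k) ⊙ A := by
      ext i j; simp [pow_succ]
    rw [hsucc]
    exact ih.hadamard hA

theorem PosSemidef.of_hasSum_map_pow {A B : Matrix ι ι ℝ} (hA : A.PosSemidef) {a : ℕ → ℝ}
    (ha : 0 ≤ a) (hB : ∀ i j, HasSum (fun k ↦ a k * A i j ^ k) (B i j)) : B.PosSemidef := by
  refine .of_dotProduct_mulVec_nonneg ?_ fun x ↦ ?_
  · ext i j
    have hji := hB j i
    rw [← hA.isHermitian.apply j i, star_trivial] at hji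
    simpa using hji.unique (hB i j)
  · have hsum : HasSum (fun k ↦ a k * (star x ⬝ᵥ (A.map (· ^ k) *ᵥ x)))
        (star x ⬝ᵥ (B *ᵥ x)) := by
      simp only [dotProduct, mulVec, Finset.mul_sum]
      refine hasSum_sum fun i _ ↦ hasSum_sum fun j _ ↦ ?_
      exact (((hB i j).mul_right (x j)).mul_left (star x i)).congr_fun fun k ↦ by
        simp only [map_apply]; ring
    exact hsum.nonneg fun k ↦ mul_nonneg (ha k) ((hA.map_pow k).dotProduct_mulVec_nonneg x)

theorem PosSemidef.map_one_div_sqrt_one_sub {A : Matrix ι ι ℝ} (hA : A.PosSemidef)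
    (h : ∀ i j, |A i j| < 1) : (A.map fun a ↦ 1 / √(1 - a)).PosSemidef := by
  obtain ⟨c, hc, hsum⟩ := Real.exists_hasSum_one_div_sqrt_one_sub
  exact hA.of_hasSum_map_pow hc fun i j ↦ hsum _ (h i j)

theorem PosSemidef.map_sq_div_sqrt_one_sub_sq {A : Matrix ι ι ℝ} (hA : A.PosSemidef) {s : ℝ}
    (h : ∀ i j, |s * A i j| < 1) : (A.map fun a ↦ a ^ 2 / √(1 - (s * a) ^ 2)).PosSemidef := by
  have hlt (i j : ι) : |(s ^ 2 • (A ⊙ A)) i j| < 1 := by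
    have := pow_lt_one₀ (abs_nonneg _) (h i j) two_ne_zero
    rw [← abs_pow, mul_pow, sq (A i j)] at this
    simpa only [smul_apply, hadamard_apply, smul_eq_mul] using this
  have hfactor : (A.map fun a ↦ a ^ 2 / √(1 - (s * a) ^ 2)) =
      A ⊙ A ⊙ (s ^ 2 • (A ⊙ A)).map fun a ↦ 1 / √(1 - a) := by
    ext i j
    simp only [map_apply, hadamard_apply, smul_apply, smul_eq_mul]
    ring_nf
  rw [hfactor]
  have hAA := hA.hadamard hA
  exact hAA.hadamard ((hAA.smul (sq_nonneg s)).map_one_div_sqrt_one_sub hlt)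

theorem hasDerivAt_dotProduct_mulVec {𝕜 : Type*} [NontriviallyNormedField 𝕜]
    {M : 𝕜 → Matrix ι ι 𝕜} {M' : Matrix ι ι 𝕜} {s : 𝕜} (x y : ι → 𝕜)
    (h : ∀ i j, HasDerivAt (fun s ↦ M s i j) (M' i j) s) :
    HasDerivAt (fun s ↦ x ⬝ᵥ (M s *ᵥ y)) (x ⬝ᵥ (M' *ᵥ y)) s := by
  simp only [dotProduct, mulVec]
  exact .fun_sum fun i _ ↦ .const_mul _ (.fun_sum fun j _ ↦ (h i j).mul_const _)

theorem PosSemidef.map_mul_arcsin {A : Matrix ι ι ℝ} (hA : A.PosSemidef)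
    (h : ∀ i j, |A i j| ≤ 1) : (A.map fun a ↦ a * arcsin a).PosSemidef := by
  refine .of_dotProduct_mulVec_nonneg (hA.isHermitian.map _ fun _ ↦ rfl) fun x ↦ ?_
  set Q : ℝ → ℝ := fun s ↦ star x ⬝ᵥ ((A.map fun a ↦ a * arcsin (s * a)) *ᵥ x)
  set Q' : ℝ → ℝ := fun s ↦ star x ⬝ᵥ ((A.map fun a ↦ a ^ 2 / √(1 - (s * a) ^ 2)) *ᵥ x)
  have hsA (s : ℝ) (hs : s ∈ Set.Ioo 0 1) (i j : ι) : |s * A i j| < 1 := by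
    rw [abs_mul, abs_of_pos hs.1]
    exact (mul_le_of_le_one_right hs.1.le (h i j)).trans_lt hs.2
  have hcont : Continuous Q := by
    simp only [Q, dotProduct, mulVec, map_apply]
    fun_prop
  have hmono : MonotoneOn Q (Set.Icc 0 1) := by
    refine monotoneOn_of_hasDerivWithinAt_nonneg (f' := Q') (convex_Icc 0 1) hcont.continuousOn
      (fun s hs ↦ ?_) (fun s hs ↦ ?_) <;> rw [interior_Icc] at hs
    · exact (hasDerivAt_dotProduct_mulVec _ _ fun i j ↦
        Real.hasDerivAt_mul_arcsin_mul (hsA s hs i j)).hasDerivWithinAt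
    · exact (hA.map_sq_div_sqrt_one_sub_sq (hsA s hs)).dotProduct_mulVec_nonneg x
  have hQ0 : Q 0 = 0 := by simp [Q, dotProduct, mulVec]
  have hQ1 : 0 ≤ Q 1 := hQ0 ▸ hmono (by simp) (by simp) zero_le_one
  simpa [Q] using hQ1

end Matrix

theorem stmt_14 (n d : ℕ) (h : Fin n → EuclideanSpace ℝ (Fin d))
    (hunit : ∀ i, ‖h i‖ = 1) :
    (Matrix.of fun i j =>
        (inner ℝ (h i) (h j) : ℝ)
          * (π - Real.arccos (inner ℝ (h i) (h j) : ℝ)) / (2 * π)).PosSemidef := by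
  have hG : (gram ℝ h).PosSemidef := posSemidef_gram ℝ h
  have hG_le (i j : Fin n) : |gram ℝ h i j| ≤ 1 := by
    simpa [hunit] using abs_real_inner_le_norm (h i) (h j)
  have hsplit : (Matrix.of fun i j =>
        (inner ℝ (h i) (h j) : ℝ) * (π - arccos (inner ℝ (h i) (h j) : ℝ)) / (2 * π)) =
      (1 / 4 : ℝ) • gram ℝ h + (1 / (2 * π)) • (gram ℝ h).map fun a ↦ a * arcsin a := by
    ext i j
    simp only [of_apply, Real.mul_pi_sub_arccos_div_two_pi, Matrix.add_apply, Matrix.smul_apply,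
      map_apply, gram_apply, smul_eq_mul]
    ring
  rw [hsplit]
  exact (hG.smul (by norm_num)).add ((hG.map_mul_arcsin hG_le).smul (by positivity))
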